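/- Let R be a Noetherian domain of prime characteristic p, let I ⊆ R be an ideal, let x, y ∈ R, and let q be a power of p. If y x^{pq} ∈ (I^{[pq]})*, then y x^{q} ∈ (I^{[q]})*. -/
import Mathlib


open IsLocalRing

/-- The Frobenius power `I^[q]` of an ideal: the ideal generated by the `q`-th powers
of the elements of `I`. -/
def Ideal.frobPow {R : Type*} [CommRing R] (I : Ideal R) (q : ℕ) : Ideal R :=
  Ideal.span ((fun x : R => x ^ q) '' (I : Set R))

/-- `R°`: the complement in `R` of the union of the minimal primes of `R`. -/
def circComplement (R : Type*) [CommRing R] : Set R :=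
  {c : R | ∀ P ∈ minimalPrimes R, c ∉ P}

/-- `x ∈ I*`: tight closure membership (`p` is the characteristic). -/
def MemTightClosure {R : Type*} [CommRing R] (p : ℕ) (I : Ideal R) (x : R) : Prop :=
  ∃ c ∈ circComplement R, ∃ N : ℕ, ∀ e : ℕ, N ≤ e → c * x ^ p ^ e ∈ I.frobPow (p ^ e)

/-- An ideal is tightly closed if `I* = I`. -/
def Ideal.IsTightlyClosed {R : Type*} [CommRing R] (p : ℕ) (I : Ideal R) : Prop :=
  ∀ x : R, MemTightClosure p I x → x ∈ I

/-- An ideal is Frobenius closed if `x^q ∈ I^[q]` for some `q` implies `x ∈ I`. -/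
def Ideal.IsFrobeniusClosed {R : Type*} [CommRing R] (p : ℕ) (I : Ideal R) : Prop :=
  ∀ x : R, (∃ e : ℕ, x ^ p ^ e ∈ I.frobPow (p ^ e)) → x ∈ I

/-- A ring is weakly F-regular if every ideal is tightly closed. -/
def IsWeaklyFRegular (R : Type*) [CommRing R] (p : ℕ) : Prop :=
  ∀ I : Ideal R, I.IsTightlyClosed p

/-- A test element: an element of `R°` that works in every tight closure test. -/
def IsTestElement {R : Type*} [CommRing R] (p : ℕ) (c : R) : Prop :=
  c ∈ circComplement R ∧
    ∀ (I : Ideal R) (x : R), MemTightClosure p I x → ∀ e : ℕ, c * x ^ p ^ e ∈ I.frobPow (p ^ e)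

/-- A (full) system of parameters of a local ring: `dim R` elements of the maximal
ideal generating an ideal whose radical is the maximal ideal. -/
def IsSystemOfParameters (R : Type*) [CommRing R] [IsLocalRing R] {n : ℕ} (x : Fin n → R) : Prop :=
  ringKrullDim R = n ∧ (∀ i, x i ∈ maximalIdeal R) ∧
    maximalIdeal R ≤ (Ideal.span (Set.range x)).radical

/-- A parameter ideal: an ideal generated by part of a system of parameters. -/
def Ideal.IsParameterIdeal {R : Type*} [CommRing R] [IsLocalRing R] (I : Ideal R) : Prop :=
  ∃ (n k : ℕ) (h : k ≤ n) (x : Fin n → R), IsSystemOfParameters R x ∧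
    I = Ideal.span (Set.range fun i : Fin k => x (Fin.castLE h i))

/-- A local ring is F-rational if every parameter ideal is tightly closed. -/
def IsFRational (R : Type*) [CommRing R] [IsLocalRing R] (p : ℕ) : Prop :=
  ∀ I : Ideal R, I.IsParameterIdeal → I.IsTightlyClosed p

/-- A local ring is F-injective if every parameter ideal is Frobenius closed. -/
def IsFInjective (R : Type*) [CommRing R] [IsLocalRing R] (p : ℕ) : Prop :=
  ∀ I : Ideal R, I.IsParameterIdeal → I.IsFrobeniusClosed p

/-- A local ring is Cohen-Macaulay if some system of parameters is a regular sequence. -/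
def IsCohenMacaulayLocalRing (R : Type*) [CommRing R] [IsLocalRing R] : Prop :=
  ∃ (n : ℕ) (x : Fin n → R), IsSystemOfParameters R x ∧
    RingTheory.Sequence.IsRegular R (List.ofFn x)

/-- An irreducible ideal: a proper ideal that is not the intersection of two
strictly larger ideals. -/
def Ideal.IsIrreducible {R : Type*} [CommRing R] (I : Ideal R) : Prop :=
  I ≠ ⊤ ∧ ∀ A B : Ideal R, I = A ⊓ B → I = A ∨ I = B

/-- A local ring is Gorenstein if it is Cohen-Macaulay and some system of parameters
generates an irreducible ideal. -/
def IsGorensteinLocalRing (R : Type*) [CommRing R] [IsLocalRing R] : Prop :=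
  ∃ (n : ℕ) (x : Fin n → R), IsSystemOfParameters R x ∧
    RingTheory.Sequence.IsRegular R (List.ofFn x) ∧
    (Ideal.span (Set.range x)).IsIrreducible


lemma frobPow_eq_map {R : Type*} [CommRing R] (p : ℕ) [Fact p.Prime] [CharP R p]
    (I : Ideal R) (n : ℕ) : I.frobPow (p ^ n) = I.map (iterateFrobenius R p n) := by
  have : (fun z : R => z ^ p ^ n) = ⇑(iterateFrobenius R p n) := by
    funext z; rw [iterateFrobenius_def]
  rw [Ideal.frobPow, Ideal.map, this]

/-- Let `R` be a Noetherian domain of prime characteristic `p`, `I ⊆ R`, `x, y ∈ R`, and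
let `q = p^e`. If `y·x^{pq} ∈ (I^{[pq]})*` then `y·x^{q} ∈ (I^{[q]})*`. -/
theorem memTightClosure_frobPow_descend
    (p : ℕ) [Fact p.Prime]
    (R : Type*) [CommRing R] [IsDomain R] [IsNoetherianRing R] [CharP R p]
    (I : Ideal R) (x y : R) (e : ℕ)
    (h : MemTightClosure p (I.frobPow (p ^ (e + 1))) (y * x ^ p ^ (e + 1))) :
    MemTightClosure p (I.frobPow (p ^ e)) (y * x ^ p ^ e) := by
  obtain ⟨c, hc, N, hN⟩ := h
  refine ⟨c, hc, N + 1, fun f hf => ?_⟩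
  obtain ⟨g, rfl⟩ : ∃ g, f = g + 1 := ⟨f - 1, by omega⟩
  have hg : N ≤ g := by omega
  have h1 := hN g hg
  have key : (I.frobPow (p ^ (e + 1))).frobPow (p ^ g)
      = (I.frobPow (p ^ e)).frobPow (p ^ (g + 1)) := by
    rw [frobPow_eq_map, frobPow_eq_map, frobPow_eq_map, frobPow_eq_map,
        Ideal.map_map, Ideal.map_map]
    congr 1
    ext z
    simp only [RingHom.comp_apply, iterateFrobenius_def, ← pow_mul]
    congr 1
    ring
  rw [key] at h1
  have hp : 1 ≤ p := (Fact.out : p.Prime).one_lt.le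
  have e1 : p ^ g * (p - 1) + p ^ g = p ^ (g + 1) := by
    calc p ^ g * (p - 1) + p ^ g = p ^ g * (p - 1 + 1) := by ring
      _ = p ^ g * p := by rw [Nat.sub_add_cancel hp]
      _ = p ^ (g + 1) := (pow_succ p g).symm
  have e2 : p ^ e * p ^ (g + 1) = p ^ (e + 1) * p ^ g := by ring
  have heq : c * (y * x ^ p ^ e) ^ p ^ (g + 1)
      = y ^ (p ^ g * (p - 1)) * (c * (y * x ^ p ^ (e + 1)) ^ p ^ g) := by
    rw [mul_pow, mul_pow, ← pow_mul, ← pow_mul, e2]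
    rw [show y ^ p ^ (g + 1) = y ^ (p ^ g * (p - 1)) * y ^ p ^ g by
      rw [← pow_add, e1]]
    ring
  rw [heq]
  exact Ideal.mul_mem_left _ _ h1
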